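/- Let G be a finite bipartite (Tanner) graph with variable-node set V and check-node set C, where variable node j has degree d_j and runs the majority-based algorithm MB^{ω_j} with order 0 ≤ ω_j ≤ d_j − 1 − ⌈d_j/2⌉. Let S ⊆ V be a set of variable nodes and let C_o(S) denote the set of check nodes having odd degree in the subgraph induced by S (i.e., check nodes with an odd number of neighbors in S). If every variable node j of the graph has at most ⌈d_j/2⌉ + ω_j − 1 neighbors in C_o(S), then S is a trapping set: when the all-one codeword is transmitted and the channel output is in error exactly on S (so the channel message of node j is m₀(j) = −1 if j ∈ S and +1 otherwise), the decoder fails to correct the errors and, at every iteration, the set of variable nodes decoded erroneously is exactly S. -/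

import Mathlib

/-!
Statement 0: For a Tanner graph where variable node `j` runs the majority-based
algorithm MB^{ω j} (with 0 ≤ ω j ≤ d_j − 1 − ⌈d_j/2⌉), if every variable node `j`
has at most ⌈d_j/2⌉ + ω j − 1 neighbors among the check nodes of odd degree in the
subgraph induced by `S`, then `S` is a trapping set: with the initial errors exactly
on `S`, at every iteration the set of variable nodes decoded erroneously is exactly `S`.
-/

open Finset

/-- `⌈d/2⌉` for a natural number `d`. -/
def ceilHalf (d : ℕ) : ℕ := (d + 1) / 2

/-- The check-node neighbors of variable node `j`. -/
def varNbrs {V C : Type*} [Fintype C] (adj : V → C → Prop)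
    [∀ j c, Decidable (adj j c)] (j : V) : Finset C :=
  Finset.univ.filter (fun c => adj j c)

/-- The variable-node neighbors of check node `c`. -/
def chkNbrs {V C : Type*} [Fintype V] (adj : V → C → Prop)
    [∀ j c, Decidable (adj j c)] (c : C) : Finset V :=
  Finset.univ.filter (fun v => adj v c)

/-- The degree `d_j` of variable node `j`. -/
def varDeg {V C : Type*} [Fintype C] (adj : V → C → Prop)
    [∀ j c, Decidable (adj j c)] (j : V) : ℕ :=
  (varNbrs adj j).card

/-- The set `C_o(S)` of check nodes having an odd number of neighbors in `S`. -/
def Codd {V C : Type*} [Fintype V] [Fintype C] [DecidableEq V] (adj : V → C → Prop)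
    [∀ j c, Decidable (adj j c)] (S : Finset V) : Finset C :=
  Finset.univ.filter (fun c => Odd ((chkNbrs adj c ∩ S).card))

/-- Check-node update: the message sent by check node `c` to variable node `j` is
the product of the (extrinsic) incoming variable-to-check messages `μ v c` over the
other neighbors `v` of `c`. -/
def checkMsg {V C : Type*} [Fintype V] [DecidableEq V] (adj : V → C → Prop)
    [∀ j c, Decidable (adj j c)] (μ : V → C → ℤ) (c : C) (j : V) : ℤ :=
  ∏ v ∈ (chkNbrs adj c).erase j, μ v c

/-- Variable-node update of MB^{ω j}: variable node `j` sends `-m₀ j` to check node `c`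
if at least `⌈d_j/2⌉ + ω j` of the extrinsic incoming check-to-variable messages equal
`-m₀ j`, and `m₀ j` otherwise. -/
def varMsg {V C : Type*} [Fintype C] [DecidableEq C] (adj : V → C → Prop)
    [∀ j c, Decidable (adj j c)] (m₀ : V → ℤ) (ω : V → ℕ)
    (inc : C → V → ℤ) (j : V) (c : C) : ℤ :=
  if ceilHalf (varDeg adj j) + ω j ≤
      (((varNbrs adj j).erase c).filter (fun c' => inc c' j = -m₀ j)).card
  then -m₀ j else m₀ j

/-- One full iteration of message passing (check-node update followed by the
MB variable-node update), mapping variable-to-check messages to new ones. -/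
def iterMap {V C : Type*} [Fintype V] [Fintype C] [DecidableEq V] [DecidableEq C]
    (adj : V → C → Prop) [∀ j c, Decidable (adj j c)] (m₀ : V → ℤ) (ω : V → ℕ)
    (μ : V → C → ℤ) : V → C → ℤ :=
  fun j c => varMsg adj m₀ ω (checkMsg adj μ) j c

/-- Decoded value of variable node `j`: `-m₀ j` if at least `⌈d_j/2⌉ + ω j` of all
incoming check-to-variable messages equal `-m₀ j`, and `m₀ j` otherwise. -/
def decoded {V C : Type*} [Fintype V] [Fintype C] [DecidableEq V] [DecidableEq C]
    (adj : V → C → Prop) [∀ j c, Decidable (adj j c)] (m₀ : V → ℤ) (ω : V → ℕ)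
    (μ : V → C → ℤ) (j : V) : ℤ :=
  if ceilHalf (varDeg adj j) + ω j ≤
      ((varNbrs adj j).filter (fun c => checkMsg adj μ c j = -m₀ j)).card
  then -m₀ j else m₀ j

/-!
Feed the channel messages back as variable-to-check messages. Check node `c` then sends
to a neighbor `j` the product of `m₀` over its other neighbors, and this differs from
`m₀ j` exactly when `c` has an odd number of neighbors in `S`. So variable node `j`
receives at most `⌈d_j/2⌉ + ω_j − 1` dissenting messages, which is below its flipping
threshold: it keeps sending and decoding `m₀ j`. The channel messages are therefore a
fixed point of the iteration, and the decoded word is `m₀` at every iteration.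
-/

section MessagePassing

variable {V C : Type*} (adj : V → C → Prop) [∀ j c, Decidable (adj j c)]

theorem mem_chkNbrs [Fintype V] {j : V} {c : C} : j ∈ chkNbrs adj c ↔ adj j c := by
  simp [chkNbrs]

theorem mem_varNbrs [Fintype C] {j : V} {c : C} : c ∈ varNbrs adj j ↔ adj j c := by
  simp [varNbrs]

theorem mul_checkMsg [Fintype V] [DecidableEq V] (μ : V → C → ℤ) {j : V} {c : C}
    (h : adj j c) : μ j c * checkMsg adj μ c j = ∏ v ∈ chkNbrs adj c, μ v c :=
  mul_prod_erase (chkNbrs adj c) (fun v => μ v c) ((mem_chkNbrs adj).2 h)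

theorem decoded_eq_of_card_lt [Fintype V] [Fintype C] [DecidableEq V] [DecidableEq C]
    (m₀ : V → ℤ) (ω : V → ℕ) (μ : V → C → ℤ) {j : V}
    (h : ((varNbrs adj j).filter (fun c => checkMsg adj μ c j = -m₀ j)).card <
      ceilHalf (varDeg adj j) + ω j) :
    decoded adj m₀ ω μ j = m₀ j :=
  if_neg (not_le.2 h)

theorem iterMap_eq_of_card_lt [Fintype V] [Fintype C] [DecidableEq V] [DecidableEq C]
    (m₀ : V → ℤ) (ω : V → ℕ) (μ : V → C → ℤ) {j : V}
    (h : ((varNbrs adj j).filter (fun c => checkMsg adj μ c j = -m₀ j)).card <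
      ceilHalf (varDeg adj j) + ω j) (c : C) :
    iterMap adj m₀ ω μ j c = m₀ j := by
  refine if_neg (not_le.2 (lt_of_le_of_lt ?_ h))
  exact card_le_card (filter_subset_filter _ (erase_subset _ _))

end MessagePassing

section ChannelMessages

variable {V C : Type*} [Fintype V] [DecidableEq V]
  (adj : V → C → Prop) [∀ j c, Decidable (adj j c)] {S : Finset V} {m₀ : V → ℤ}

theorem prod_chkNbrs_channel (hm₀ : ∀ j, m₀ j = if j ∈ S then -1 else 1) (c : C) :
    ∏ v ∈ chkNbrs adj c, m₀ v = (-1) ^ (chkNbrs adj c ∩ S).card := by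
  simp_rw [hm₀, prod_ite_mem, prod_const]

theorem checkMsg_channel_eq_neg_iff [Fintype C] (hm₀ : ∀ j, m₀ j = if j ∈ S then -1 else 1)
    {j : V} {c : C} (h : adj j c) :
    checkMsg adj (fun v _ => m₀ v) c j = -m₀ j ↔ c ∈ Codd adj S := by
  have hprod := (mul_checkMsg adj (fun v _ => m₀ v) h).trans (prod_chkNbrs_channel adj hm₀ c)
  have hsq : m₀ j * m₀ j = 1 := by rw [hm₀ j]; split_ifs <;> norm_num
  have hneg : checkMsg adj (fun v _ => m₀ v) c j = -m₀ j ↔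
      m₀ j * checkMsg adj (fun v _ => m₀ v) c j = -1 := by
    constructor
    · intro he; rw [he, mul_neg, hsq]
    · intro he; linear_combination m₀ j * he - checkMsg adj (fun v _ => m₀ v) c j * hsq
  simp only [hneg, hprod, Codd, mem_filter, mem_univ, true_and]
  exact neg_one_pow_eq_neg_one_iff_odd (by norm_num)

theorem filter_checkMsg_channel_eq_inter_Codd [Fintype C] [DecidableEq C]
    (hm₀ : ∀ j, m₀ j = if j ∈ S then -1 else 1) (j : V) :
    (varNbrs adj j).filter (fun c => checkMsg adj (fun v _ => m₀ v) c j = -m₀ j) =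
      varNbrs adj j ∩ Codd adj S := by
  rw [← filter_mem_eq_inter]
  exact filter_congr fun c hc =>
    checkMsg_channel_eq_neg_iff adj hm₀ ((mem_varNbrs adj).1 hc)

end ChannelMessages

theorem trapping_set_theorem_general
    {V C : Type*} [Fintype V] [Fintype C] [DecidableEq V] [DecidableEq C]
    (adj : V → C → Prop) [∀ j c, Decidable (adj j c)]
    (ω : V → ℕ) (S : Finset V) (m₀ : V → ℤ)
    -- the all-one codeword is transmitted and the errors are exactly on S
    (hm₀ : ∀ j : V, m₀ j = if j ∈ S then -1 else 1)
    -- every variable node j has at most ⌈d_j/2⌉ + ω j − 1 neighbors in C_o(S)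
    (hS : ∀ j : V, ((varNbrs adj j ∩ Codd adj S).card : ℤ) ≤
        (ceilHalf (varDeg adj j) : ℤ) + (ω j : ℤ) - 1) :
    -- at every iteration, the set of variable nodes decoded erroneously is exactly S,
    -- i.e. the decoder fails to correct the errors
    ∀ l : ℕ,
      Finset.univ.filter
        (fun j => decoded adj m₀ ω ((iterMap adj m₀ ω)^[l] (fun v _ => m₀ v)) j = -1)
      = S := by
  have hlt : ∀ j, ((varNbrs adj j).filter
      (fun c => checkMsg adj (fun v _ => m₀ v) c j = -m₀ j)).card <
        ceilHalf (varDeg adj j) + ω j := by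
    intro j
    have := hS j
    rw [filter_checkMsg_channel_eq_inter_Codd adj hm₀ j]
    omega
  have hfix : iterMap adj m₀ ω (fun v _ => m₀ v) = fun v _ => m₀ v :=
    funext₂ fun j => iterMap_eq_of_card_lt adj m₀ ω _ (hlt j)
  intro l
  ext j
  rw [Function.iterate_fixed hfix l, mem_filter, decoded_eq_of_card_lt adj m₀ ω _ (hlt j),
    hm₀ j]
  split_ifs with hj <;> simp [hj]

theorem trapping_set_theorem
    {V C : Type*} [Fintype V] [Fintype C] [DecidableEq V] [DecidableEq C]
    (adj : V → C → Prop) [∀ j c, Decidable (adj j c)]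
    (ω : V → ℕ) (S : Finset V) (m₀ : V → ℤ)
    -- each variable node runs MB^{ω j} with 0 ≤ ω j ≤ d_j − 1 − ⌈d_j/2⌉
    (hω : ∀ j : V, (ω j : ℤ) ≤ (varDeg adj j : ℤ) - 1 - (ceilHalf (varDeg adj j) : ℤ))
    -- the all-one codeword is transmitted and the errors are exactly on S
    (hm₀ : ∀ j : V, m₀ j = if j ∈ S then -1 else 1)
    -- every variable node j has at most ⌈d_j/2⌉ + ω j − 1 neighbors in C_o(S)
    (hS : ∀ j : V, ((varNbrs adj j ∩ Codd adj S).card : ℤ) ≤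
        (ceilHalf (varDeg adj j) : ℤ) + (ω j : ℤ) - 1) :
    -- at every iteration, the set of variable nodes decoded erroneously is exactly S,
    -- i.e. the decoder fails to correct the errors
    ∀ l : ℕ,
      Finset.univ.filter
        (fun j => decoded adj m₀ ω ((iterMap adj m₀ ω)^[l] (fun v _ => m₀ v)) j = -1)
      = S :=
  trapping_set_theorem_general adj ω S m₀ hm₀ hS
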